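/- arXiv:2212.08959 — 6 statements merged into one kernel-verified Lean document; each statement's English description precedes it below -/
import Mathlib

section
/- Let p ≠ q be words of the same length over a finite alphabet, and let L be the function on words that replaces the leftmost occurrence of q by p (and is the identity if no occurrence of q exists). Then for every word w of length n there exists k such that L^k(w) contains no occurrence of q. -/
/-!
Let `b` be the letter of `q` at the last position where `p` and `q` differ, and read a word as
a binary numeral, least significant letter first, with digit `1` exactly at the letters `b`.
Then `p` reads strictly smaller than `q`, and since the numeral of `u ++ y ++ v` is monotone in
`y` among words of a fixed length, every replacement of `q` by `p` strictly decreases the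
numeral of the word. A strictly decreasing sequence of naturals is finite.
-/

open List

/-- A nonempty word `x` is a border of `p` if it is both a prefix and a suffix of `p`. -/
def Border {α : Type*} (x p : List α) : Prop := x ≠ [] ∧ x <+: p ∧ x <:+ p

/-- A proper border is a border different from the word itself. -/
def ProperBorder {α : Type*} (x p : List α) : Prop := Border x p ∧ x ≠ p

/-- The border length set of `p`. -/
def borderLengths {α : Type*} (p : List α) : Set ℕ :=
  {n | ∃ x, Border x p ∧ x.length = n}

/-- `replL q p w` replaces the leftmost contiguous occurrence of `q` in `w` by `p`
(identity if there is no occurrence). -/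
def replL {α : Type*} [DecidableEq α] (q p : List α) : List α → List α
  | [] => []
  | a :: w => if q <+: (a :: w) then p ++ (a :: w).drop q.length else a :: replL q p w

/-- `replR p q w` replaces the rightmost contiguous occurrence of `p` in `w` by `q`
(identity if there is no occurrence). -/
def replR {α : Type*} [DecidableEq α] (p q : List α) : List α → List α
  | [] => []
  | a :: w =>
    if p <:+: w then a :: replR p q w
    else if p <+: (a :: w) then q ++ (a :: w).drop p.length
    else a :: w

/-- `phiL q p w` iterates `replL q p` a minimal number of times so that no occurrence
of `q` remains (if such an iterate exists). -/
noncomputable def phiL {α : Type*} [DecidableEq α] (q p : List α) (w : List α) : List α :=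
  (replL q p)^[sInf {i | ¬ q <:+: (replL q p)^[i] w}] w

/-- `phiR p q w` iterates `replR p q` a minimal number of times so that no occurrence
of `p` remains (if such an iterate exists). -/
noncomputable def phiR {α : Type*} [DecidableEq α] (p q : List α) (w : List α) : List α :=
  (replR p q)^[sInf {j | ¬ p <:+: (replR p q)^[j] w}] w

theorem Function.exists_not_iterate_of_measure_lt {β : Type*} (f : β → β) (P : β → Prop)
    (μ : β → ℕ) (hμ : ∀ x, P x → μ (f x) < μ x) (x : β) : ∃ k, ¬ P (f^[k] x) := by
  induction hx : μ x using Nat.strong_induction_on generalizing x with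
  | _ m ih =>
    by_cases hPx : P x
    · obtain ⟨k, hk⟩ := ih _ (hx ▸ hμ x hPx) (f x) rfl
      exact ⟨k + 1, hk⟩
    · exact ⟨0, hPx⟩

theorem List.exists_eq_append_cons_of_ne {α : Type*} :
    ∀ {p q : List α}, p.length = q.length → p ≠ q →
      ∃ (s s' t : List α) (a b : α), a ≠ b ∧ s.length = s'.length ∧
        p = s ++ a :: t ∧ q = s' ++ b :: t
  | [], [], _, hne => absurd rfl hne
  | x :: p, y :: q, hlen, hne => by
    by_cases hpq : p = q
    · subst hpq
      exact ⟨[], [], p, x, y, fun hxy => hne (hxy ▸ rfl), rfl, rfl, rfl⟩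
    · obtain ⟨s, s', t, a, b, hab, hs, rfl, rfl⟩ :=
        exists_eq_append_cons_of_ne (Nat.succ_injective hlen) hpq
      exact ⟨x :: s, y :: s', t, a, b, hab, by simp [hs], rfl, rfl⟩

theorem replL_eq_of_infix {α : Type*} [DecidableEq α] {q : List α} (p : List α) (hq : q ≠ []) :
    ∀ {w}, q <:+: w → ∃ u v, w = u ++ q ++ v ∧ replL q p w = u ++ p ++ v
  | [], h => absurd (eq_nil_of_infix_nil h) hq
  | a :: w, h => by
    by_cases hpre : q <+: a :: w
    · obtain ⟨v, hv⟩ := hpre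
      refine ⟨[], v, by simp [hv], ?_⟩
      rw [replL, if_pos ⟨v, hv⟩, ← hv, drop_left]
      rfl
    · obtain ⟨u, v, rfl, hr⟩ :=
        replL_eq_of_infix p hq ((infix_cons_iff.mp h).resolve_left hpre)
      exact ⟨a :: u, v, rfl, by rw [replL, if_neg hpre, hr]; rfl⟩

section BinaryCode

variable {α : Type*} [DecidableEq α] (b : α)

def binaryCode (x : List α) : ℕ :=
  Nat.ofDigits 2 (x.map fun c => if c = b then 1 else 0)

theorem binaryCode_append (x y : List α) :
    binaryCode b (x ++ y) = binaryCode b x + 2 ^ x.length * binaryCode b y := by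
  simp [binaryCode, Nat.ofDigits_append]

theorem binaryCode_cons (c : α) (x : List α) :
    binaryCode b (c :: x) = (if c = b then 1 else 0) + 2 * binaryCode b x :=
  Nat.ofDigits_cons

theorem binaryCode_lt_two_pow_length (x : List α) : binaryCode b x < 2 ^ x.length := by
  have h := Nat.ofDigits_lt_base_pow_length (b := 2) (l := x.map fun c => if c = b then 1 else 0)
    one_lt_two (by simp only [mem_map]; rintro _ ⟨c, -, rfl⟩; split <;> omega)
  simpa [binaryCode] using h

theorem binaryCode_lt_of_ne {a : α} (hab : a ≠ b) {s s' : List α} (hs : s.length = s'.length)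
    (t : List α) : binaryCode b (s ++ a :: t) < binaryCode b (s' ++ b :: t) := by
  have := binaryCode_lt_two_pow_length b s
  simp only [binaryCode_append, binaryCode_cons, if_neg hab, ↓reduceIte, hs] at this ⊢
  nlinarith

theorem binaryCode_append_lt_append {y y' : List α} (hlen : y.length = y'.length)
    (hy : binaryCode b y < binaryCode b y') (u v : List α) :
    binaryCode b (u ++ y ++ v) < binaryCode b (u ++ y' ++ v) := by
  simp only [append_assoc, binaryCode_append, hlen]
  gcongr

end BinaryCode

theorem stmt_5_general {α : Type*} [DecidableEq α] {p q : List α}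
    (hne : p ≠ q) (hlen : p.length = q.length) (w : List α) :
    ∃ k, ¬ q <:+: (replL q p)^[k] w := by
  have hq : q ≠ [] := by
    rintro rfl
    exact hne (length_eq_zero_iff.mp hlen)
  obtain ⟨s, s', t, a, b, hab, hs, rfl, rfl⟩ := exists_eq_append_cons_of_ne hlen hne
  refine Function.exists_not_iterate_of_measure_lt _ _ (binaryCode b) (fun x hx => ?_) w
  obtain ⟨u, v, rfl, hr⟩ := replL_eq_of_infix (s ++ a :: t) hq hx
  rw [hr]
  exact binaryCode_append_lt_append b hlen (binaryCode_lt_of_ne b hab hs t) u v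

/-- If `p ≠ q` have equal length, then iterating the leftmost replacement of `q` by `p`
eventually yields a word with no occurrence of `q`. -/
theorem stmt_5 {α : Type*} [Fintype α] [DecidableEq α] {p q : List α}
    (hne : p ≠ q) (hlen : p.length = q.length) (n : ℕ) (w : List α) (hw : w.length = n) :
    ∃ k, ¬ q <:+: (replL q p)^[k] w :=
  stmt_5_general hne hlen w
end

section
/- Let p, q be equal-length words, φ_R the iterated map replacing rightmost occurrences of p with q until none remain, and φ̄_L the iterated map replacing leftmost occurrences of p̄ with q̄ until none remain. Then for every word v avoiding q, φ_R(v) is the reversal of φ̄_L(v̄) (Lemma 2, Equation (2)). -/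
open List

section Aux
variable {α : Type*} [DecidableEq α]

/-- If `q'` does not occur in `w`, `replL` is the identity. -/
lemma replL_of_not_infix {q' p' : List α} : ∀ {w : List α}, ¬ q' <:+: w → replL q' p' w = w
  | [], _ => rfl
  | a :: w, h => by
    have hnp : ¬ q' <+: (a :: w) := fun hp => h (List.infix_cons_iff.2 (Or.inl hp))
    have hni : ¬ q' <:+: w := fun hi => h (List.infix_cons_iff.2 (Or.inr hi))
    simp only [replL, if_neg hnp, replL_of_not_infix hni]

/-- If `q'` occurs in `u`, the leftmost occurrence in `u ++ s` is inside `u`. -/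
lemma replL_append {q' p' : List α} (hq : q' ≠ []) :
    ∀ {u : List α} (s : List α), q' <:+: u → replL q' p' (u ++ s) = replL q' p' u ++ s
  | [], s, h => absurd (List.eq_nil_of_infix_nil h) hq
  | a :: u, s, h => by
    rw [List.cons_append]
    by_cases hp : q' <+: (a :: u)
    · have hp' : q' <+: a :: (u ++ s) := by
        rw [← List.cons_append]; exact hp.trans (List.prefix_append _ _)
      have hlen : q'.length ≤ (a :: u).length := hp.length_le
      have hd : (a :: (u ++ s)).drop q'.length = (a :: u).drop q'.length ++ s := by
        rw [← List.cons_append]; exact List.drop_append_of_le_length hlen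
      simp only [replL, if_pos hp', if_pos hp, hd, List.append_assoc]
    · have hi : q' <:+: u := (List.infix_cons_iff.1 h).resolve_left hp
      have hp' : ¬ q' <+: a :: (u ++ s) := by
        rw [← List.cons_append]
        intro hpre
        apply hp
        have h1 : q'.length ≤ (a :: u).length := le_trans hi.length_le (by simp)
        have ht := List.prefix_iff_eq_take.1 hpre
        rw [List.take_append_of_le_length h1] at ht
        exact ht ▸ List.take_prefix _ _
      simp only [replL, if_neg hp', if_neg hp, replL_append hq s hi, List.cons_append]

/-- If `q'` is a suffix of `w` and occurs nowhere else, `replL` replaces that suffix. -/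
lemma replL_suffix {q' p' : List α} (hq : q' ≠ []) :
    ∀ {w : List α}, q' <:+ w → ¬ q' <:+: w.dropLast →
      replL q' p' w = w.take (w.length - q'.length) ++ p'
  | [], hs, _ => absurd (List.eq_nil_of_suffix_nil hs) hq
  | a :: w, hs, hnd => by
    by_cases hp : q' <+: (a :: w)
    · have heq : q' = a :: w := by
        rcases lt_or_eq_of_le hp.length_le with hlt | hle
        · exfalso
          apply hnd
          have : q' <+: (a :: w).dropLast := by
            rw [List.dropLast_eq_take, List.prefix_take_iff]
            exact ⟨hp, by omega⟩
          exact this.isInfix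
        · exact List.IsPrefix.eq_of_length hp hle
      subst heq
      simp [replL]
    · have hs' : q' <:+ w := (List.suffix_cons_iff.1 hs).resolve_left
        (fun he => hp (he ▸ List.prefix_refl _))
      have hw : w ≠ [] := fun hw => hq (by simpa [hw] using List.eq_nil_of_suffix_nil (hw ▸ hs'))
      have hnd' : ¬ q' <:+: w.dropLast := fun hi => by
        apply hnd
        rw [List.dropLast_cons_of_ne_nil hw]
        exact List.infix_cons_iff.2 (Or.inr hi)
      have hlen : q'.length ≤ w.length := hs'.length_le
      have hn : (a :: w).length - q'.length = (w.length - q'.length) + 1 := by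
        simp only [List.length_cons]; omega
      rw [replL, if_neg hp, replL_suffix hq hs' hnd', hn, List.take_succ_cons,
        List.cons_append]

/-- The key reversal lemma: one step of rightmost replacement corresponds to one step
of leftmost replacement on the reversal. -/
lemma replL_reverse_eq {p q : List α} (hp : p ≠ []) :
    ∀ (w : List α), replL p.reverse q.reverse w.reverse = (replR p q w).reverse
  | [] => rfl
  | a :: w => by
    have hpr : p.reverse ≠ [] := fun h => hp (by simpa using congrArg List.reverse h)
    by_cases hi : p <:+: w
    · have hi' : p.reverse <:+: w.reverse := List.reverse_infix.2 hi
      rw [replR, if_pos hi]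
      rw [List.reverse_cons, replL_append hpr [a] hi', replL_reverse_eq hp w,
        List.reverse_cons]
    · by_cases hpre : p <+: (a :: w)
      · have hsuf : p.reverse <:+ (a :: w).reverse := List.reverse_suffix.2 hpre
        have hnd : ¬ p.reverse <:+: ((a :: w).reverse).dropLast := by
          rw [List.reverse_cons, List.dropLast_concat]
          exact fun h => hi (List.reverse_infix.1 h)
        rw [replR, if_neg hi, if_pos hpre, replL_suffix hpr hsuf hnd]
        rw [List.reverse_append, List.reverse_drop, List.length_reverse,
          List.length_reverse]
      · have hni : ¬ p.reverse <:+: (a :: w).reverse := by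
          rw [List.reverse_infix]
          intro h
          rcases List.infix_cons_iff.1 h with h | h
          · exact hpre h
          · exact hi h
        rw [replR, if_neg hi, if_neg hpre, replL_of_not_infix hni]

lemma replL_reverse_iterate {p q : List α} (hp : p ≠ []) (v : List α) :
    ∀ n, (replL p.reverse q.reverse)^[n] v.reverse = ((replR p q)^[n] v).reverse
  | 0 => rfl
  | n + 1 => by
    rw [Function.iterate_succ_apply', Function.iterate_succ_apply',
      replL_reverse_iterate hp v n, replL_reverse_eq hp]
end Aux

/-- Lemma 2, Equation (2): for a word `v` avoiding `q`, the iterated rightmost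
replacement of `p` by `q` in `v` is the reversal of the iterated leftmost replacement of
`reverse p` by `reverse q` in `reverse v`. -/
theorem stmt_8 {α : Type*} [Fintype α] [DecidableEq α] {p q : List α}
    (hne : p ≠ q) (hlen : p.length = q.length) (v : List α) (hv : ¬ q <:+: v) :
    phiR p q v = (phiL p.reverse q.reverse v.reverse).reverse := by
  have hp : p ≠ [] := by
    intro h
    apply hne
    rw [h] at hlen ⊢
    exact (List.eq_nil_of_length_eq_zero hlen.symm).symm
  have hset : {i | ¬ p.reverse <:+: (replL p.reverse q.reverse)^[i] v.reverse} =
      {j | ¬ p <:+: (replR p q)^[j] v} := by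
    ext i
    simp only [Set.mem_setOf_eq, replL_reverse_iterate hp v i, List.reverse_infix]
  rw [phiR, phiL, hset, replL_reverse_iterate hp v, List.reverse_reverse]
end

section
/- Let p and q be distinct equal-length words over a finite alphabet whose sets of proper borders are equal. If w avoids p and L(w) is obtained by replacing the leftmost occurrence of q in w with p, then this newly inserted occurrence of p is the rightmost occurrence of p in L(w); consequently R(L(w)) = w, where R replaces the rightmost occurrence of p with q. -/
/-!
An occurrence of `p` in `L(w)` that starts after the inserted `p` ends lies entirely in `w`.
One that starts strictly inside the inserted `p` overlaps it in a proper border `x` of `p`;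
`x` is then a proper border of `q`, i.e. the suffix of `q` of the same length, so the
occurrence was already present in `w`. Both contradict `w` avoiding `p`, so the inserted `p`
is the rightmost occurrence, and replacing it by `q` restores `w`.
-/

open List

namespace List

variable {α : Type*}

theorem infix_iff_exists_prefix_drop {p w : List α} : p <:+: w ↔ ∃ j, p <+: w.drop j := by
  constructor
  · rintro ⟨s, t, rfl⟩
    exact ⟨s.length, t, by rw [append_assoc, drop_left]⟩
  · rintro ⟨j, h⟩
    exact h.isInfix.trans (w.drop_suffix j).isInfix

theorem exists_eq_append_append_of_prefix_drop {q w : List α} {i : ℕ} (hq : q ≠ [])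
    (h : q <+: w.drop i) : ∃ s t, w = s ++ q ++ t ∧ s.length = i := by
  obtain ⟨t, ht⟩ := h
  have hi : i ≤ w.length := by
    by_contra! hi
    rw [drop_eq_nil_of_le hi.le] at ht
    exact hq (append_eq_nil_iff.mp ht).1
  exact ⟨w.take i, t, by rw [append_assoc, ht, take_append_drop], length_take_of_le hi⟩

end List

open List

section Replace

variable {α : Type*} [DecidableEq α]

theorem replL_append_append {p q s t : List α} (hq : q ≠ [])
    (hmin : ∀ j, q <+: (s ++ q ++ t).drop j → s.length ≤ j) :
    replL q p (s ++ q ++ t) = s ++ p ++ t := by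
  induction s with
  | nil =>
    obtain ⟨a, q', rfl⟩ := exists_cons_of_ne_nil hq
    simp [replL]
  | cons a s ih =>
    have hhead : ¬ q <+: a :: (s ++ q ++ t) := fun h => by
      simpa using hmin 0 (by simpa using h)
    rw [cons_append, cons_append, replL, if_neg hhead, ih fun j hj => by
      simpa using hmin (j + 1) (by simpa using hj)]
    rfl

theorem replR_append_append {p q s t : List α} (hp : p ≠ [])
    (hmax : ∀ j, p <+: (s ++ p ++ t).drop j → j ≤ s.length) :
    replR p q (s ++ p ++ t) = s ++ q ++ t := by
  induction s with
  | nil =>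
    obtain ⟨a, p', rfl⟩ := exists_cons_of_ne_nil hp
    have hlast : ¬ a :: p' <:+: p' ++ t := fun h => by
      obtain ⟨j, hj⟩ := infix_iff_exists_prefix_drop.mp h
      simpa using hmax (j + 1) (by simpa using hj)
    simp [replR, hlast]
  | cons a s ih =>
    have hocc : p <:+: s ++ p ++ t := infix_append s p t
    rw [cons_append, cons_append, replR, if_pos hocc, ih fun j hj => by
      simpa using hmax (j + 1) (by simpa using hj)]
    rfl

end Replace

theorem prefix_drop_append_append_of_properBorder_subset {α : Type*} {p q s t : List α}
    (hb : {x | ProperBorder x p} ⊆ {x | ProperBorder x q}) (hlen : p.length = q.length)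
    {j : ℕ} (hj : s.length < j) (h : p <+: (s ++ p ++ t).drop j) :
    p <+: (s ++ q ++ t).drop j := by
  obtain ⟨k, rfl⟩ := Nat.exists_eq_add_of_le hj.le
  rw [append_assoc, drop_length_add_append] at h
  rw [append_assoc, drop_length_add_append]
  rcases le_or_gt p.length k with hkp | hkp
  · simpa [drop_append, drop_eq_nil_of_le hkp, drop_eq_nil_of_le (hlen ▸ hkp), hlen] using h
  · rw [drop_append_of_le_length hkp.le] at h
    rw [drop_append_of_le_length (hlen ▸ hkp.le)]
    have hborder : ProperBorder (p.drop k) p := by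
      refine ⟨⟨?_, prefix_of_prefix_length_le (prefix_append _ t) h (by simp), drop_suffix k p⟩, ?_⟩
      · exact ne_nil_of_length_pos (by rw [length_drop]; omega)
      · intro e
        have hk := congrArg length e
        simp only [length_drop] at hk
        omega
    have hsuffix : p.drop k = q.drop k := by
      rw [suffix_iff_eq_drop.mp (hb hborder).1.2.2, length_drop, hlen,
        Nat.sub_sub_self (hlen ▸ hkp.le)]
    rwa [← hsuffix]

theorem stmt_9_general {α : Type*} [DecidableEq α] {p q w : List α}
    (hlen : p.length = q.length)
    (hpb : {x | ProperBorder x p} = {x | ProperBorder x q})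
    (hw : ¬ p <:+: w)
    (i : ℕ) (hi : q <+: w.drop i) (hmin : ∀ j, q <+: w.drop j → i ≤ j) :
    replL q p w = w.take i ++ p ++ w.drop (i + q.length) ∧
    p <+: (replL q p w).drop i ∧
    (∀ j, p <+: (replL q p w).drop j → j ≤ i) ∧
    replR p q (replL q p w) = w := by
  have hp : p ≠ [] := by rintro rfl; exact hw nil_infix
  have hq : q ≠ [] := by rintro rfl; exact hp (length_eq_zero_iff.mp hlen)
  obtain ⟨s, t, rfl, rfl⟩ := exists_eq_append_append_of_prefix_drop hq hi
  have hmax : ∀ j, p <+: (s ++ p ++ t).drop j → j ≤ s.length := fun j hj => by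
    by_contra! hj'
    exact hw (infix_iff_exists_prefix_drop.mpr
      ⟨j, prefix_drop_append_append_of_properBorder_subset hpb.subset hlen hj' hj⟩)
  rw [replL_append_append hq hmin]
  exact ⟨by simp, by simp, hmax, replR_append_append hp hmax⟩

/-- If `p ≠ q` have equal length and equal proper border sets, `w` avoids `p` and contains
`q`, and `i` is the index of the leftmost occurrence of `q` in `w`, then the inserted
occurrence of `p` in `replL q p w` is its rightmost occurrence of `p`; consequently
`replR p q (replL q p w) = w`. -/
theorem stmt_9 {α : Type*} [Fintype α] [DecidableEq α] {p q w : List α}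
    (hne : p ≠ q) (hlen : p.length = q.length)
    (hpb : {x | ProperBorder x p} = {x | ProperBorder x q})
    (hw : ¬ p <:+: w) (hq : q <:+: w)
    (i : ℕ) (hi : q <+: w.drop i) (hmin : ∀ j, q <+: w.drop j → i ≤ j) :
    replL q p w = w.take i ++ p ++ w.drop (i + q.length) ∧
    p <+: (replL q p w).drop i ∧
    (∀ j, p <+: (replL q p w).drop j → j ≤ i) ∧
    replR p q (replL q p w) = w :=
  stmt_9_general hlen hpb hw i hi hmin
end

section
/- Let p and q be distinct, equal-length words over a finite alphabet Σ such that the set of proper borders of p equals the set of proper borders of q. Then for every n, the map φ_L, which iteratively replaces the leftmost occurrence of q with p until no occurrence of q remains, is a bijection from the set A_n(p) of length-n words avoiding p to the set A_n(q) of length-n words avoiding q (Main Theorem). -/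
/-!
Replacing the leftmost `q` by `p` is undone by replacing the rightmost `p` by `q`, as long as every
occurrence of `p` to the right of the leftmost `q` overlaps it, and not along a border of `p`
(`Admissible`). Two overlapping occurrences of a word overlap along a border, and `p`, `q` agree
on their common borders; so occurrences away from the replaced block, or overlapping it along a
border, are the same before and after a replacement. This shows that words avoiding `p` stay
admissible along the orbit of `replL q p`, and that `phiR p q` retraces the orbit back to its
start: `phiL q p` is injective on `A_n(p)`. The hypotheses are symmetric in `p` and `q`, so
`phiL p q` injects `A_n(q)` into `A_n(p)`, and the two finite sets have the same size.

The orbit of `replL q p` ends because each step lowers the value of the word read as a binary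
numeral with digit `1` exactly at the letter where `q` first differs from `p`.
-/

open List

section

variable {α : Type*}

/-- `g` retraces the `f`-orbit, which lies in `B` except at its start `x`, so the first exit of
the `g`-orbit from `B` is at `x`. -/
theorem Function.iterate_sInf_leftInverse {β : Type*} {f g : β → β} {I A B : β → Prop}
    (hstep : ∀ x, I x → A x → I (f x) ∧ B (f x) ∧ g (f x) = x)
    {x : β} {k : ℕ} (hI : I x) (hB : ¬ B x) (hA : ∀ i < k, A (f^[i] x)) :
    g^[sInf {j | ¬ B (g^[j] (f^[k] x))}] (f^[k] x) = x := by
  have hI' : ∀ i ≤ k, I (f^[i] x) := by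
    intro i
    induction i with
    | zero => exact fun _ => hI
    | succ i ih =>
      intro hi
      rw [Function.iterate_succ_apply']
      exact (hstep _ (ih (by omega)) (hA i (by omega))).1
  have hstep' : ∀ i < k, B (f^[i + 1] x) ∧ g (f^[i + 1] x) = f^[i] x := fun i hi => by
    rw [Function.iterate_succ_apply']
    exact (hstep _ (hI' i hi.le) (hA i hi)).2
  have hback : ∀ j ≤ k, g^[j] (f^[k] x) = f^[k - j] x := by
    intro j
    induction j with
    | zero => exact fun _ => rfl
    | succ j ih =>
      intro hj
      rw [Function.iterate_succ_apply', ih (by omega), show k - j = k - (j + 1) + 1 by omega,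
        (hstep' _ (by omega)).2]
  have hexit : sInf {j | ¬ B (g^[j] (f^[k] x))} = k := by
    refine le_antisymm (Nat.sInf_le (by simpa [hback k le_rfl] using hB))
      (le_csInf ⟨k, by simpa [hback k le_rfl] using hB⟩ fun j hj => ?_)
    by_contra! hjk
    apply hj
    rw [hback j hjk.le, show k - j = k - j - 1 + 1 by omega]
    exact (hstep' _ (by omega)).1
  rw [hexit, hback k le_rfl, Nat.sub_self, Function.iterate_zero_apply]

theorem Set.bijOn_of_injOn_of_injOn {β : Type*} {s : Set α} {t : Set β} {f : α → β}
    {g : β → α} (hs : s.Finite) (ht : t.Finite) (hf : MapsTo f s t) (hf' : InjOn f s)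
    (hg : MapsTo g t s) (hg' : InjOn g t) : BijOn f s t := by
  have himage : f '' s = t := eq_of_subset_of_ncard_le hf.image_subset
    ((ncard_le_ncard_of_injOn g hg hg' hs).trans_eq (hf'.ncard_image).symm) ht
  exact ⟨hf, hf', himage.symm.subset⟩

def OccursAt (u w : List α) (i : ℕ) : Prop := ∀ d < u.length, w[i + d]? = u[d]?

section Occurrences

variable {u w s t x y : List α} {a : α} {i j : ℕ}

theorem occursAt_iff_prefix_drop : OccursAt u w i ↔ u <+: w.drop i := by
  simp only [OccursAt, prefix_iff_getElem?, getElem?_drop]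
  exact forall₂_congr fun d hd => by rw [getElem?_eq_getElem hd]

theorem occursAt_zero_iff : OccursAt u w 0 ↔ u <+: w := by
  simp [occursAt_iff_prefix_drop]

theorem occursAt_cons_succ : OccursAt u (a :: w) (i + 1) ↔ OccursAt u w i := by
  simp only [OccursAt, Nat.add_right_comm i 1, getElem?_cons_succ]

theorem occursAt_append : OccursAt u (s ++ u ++ t) s.length := by
  intro d hd
  rw [append_assoc, getElem?_append_right (by omega), Nat.add_sub_cancel_left,
    getElem?_append_left hd]

theorem infix_iff_exists_occursAt : u <:+: w ↔ ∃ i, OccursAt u w i := by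
  constructor
  · rintro ⟨s, t, rfl⟩
    exact ⟨s.length, occursAt_append⟩
  · rintro ⟨i, hi⟩
    exact (occursAt_iff_prefix_drop.1 hi).isInfix.trans (drop_suffix i w).isInfix

theorem getElem?_append_append_congr (hxy : x.length = y.length) {l : ℕ}
    (h : s.length ≤ l → l < s.length + x.length → x[l - s.length]? = y[l - s.length]?) :
    (s ++ x ++ t)[l]? = (s ++ y ++ t)[l]? := by
  rw [append_assoc, append_assoc]
  rcases lt_or_ge l s.length with hl | hl
  · rw [getElem?_append_left hl, getElem?_append_left hl]
  · rw [getElem?_append_right hl, getElem?_append_right hl]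
    rcases lt_or_ge (l - s.length) x.length with hl' | hl'
    · rw [getElem?_append_left hl', getElem?_append_left (hxy ▸ hl'), h hl (by omega)]
    · rw [getElem?_append_right hl', getElem?_append_right (hxy ▸ hl'), hxy]

theorem OccursAt.append_congr (h : OccursAt u (s ++ x ++ t) j) (hxy : x.length = y.length)
    (hagree : ∀ d < x.length, j ≤ s.length + d → s.length + d < j + u.length →
      x[d]? = y[d]?) :
    OccursAt u (s ++ y ++ t) j := by
  intro d hd
  rw [← getElem?_append_append_congr hxy
    fun h₁ h₂ => hagree _ (by omega) (by omega) (by omega), h d hd]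

end Occurrences

section Borders

variable {u : List α} {k : ℕ}

theorem properBorder_take_iff :
    ProperBorder (u.take k) u ↔
      0 < k ∧ k < u.length ∧ ∀ d < k, u[d]? = u[u.length - k + d]? := by
  constructor
  · rintro ⟨⟨hne, -, hsuf⟩, hself⟩
    have hk : k < u.length := lt_of_not_ge fun h => hself (take_of_length_le h)
    rw [suffix_iff_eq_drop, length_take_of_le hk.le] at hsuf
    refine ⟨Nat.pos_of_ne_zero fun h => hne (by simp [h]), hk, fun d hd => ?_⟩
    rw [← getElem?_take_of_lt hd, hsuf, getElem?_drop]
  · rintro ⟨hk0, hk, h⟩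
    refine ⟨⟨fun he => ?_, take_prefix _ _, ?_⟩, fun he => ?_⟩
    · rw [take_eq_nil_iff] at he
      rcases he with he | he <;> simp_all
    · rw [suffix_iff_eq_drop, length_take_of_le hk.le]
      refine ext_getElem? fun d => ?_
      rw [getElem?_take, getElem?_drop]
      split_ifs with hd
      · exact h d hd
      · exact (getElem?_eq_none (by omega)).symm
    · have := congrArg length he
      rw [length_take_of_le hk.le] at this
      omega

theorem OccursAt.properBorder_take {w : List α} {i j : ℕ} (hi : OccursAt u w i)
    (hj : OccursAt u w j) (hij : i < j) (hji : j < i + u.length) :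
    ProperBorder (u.take (i + u.length - j)) u :=
  properBorder_take_iff.2 ⟨by omega, by omega, fun d hd => by
    rw [← hj d (by omega), show u.length - (i + u.length - j) + d = j - i + d by omega,
      ← hi _ (by omega), show i + (j - i + d) = j + d by omega]⟩

/-- Borders of lengths `a` and `b` are periods `|u| - a` and `|u| - b`, and the sum of two
periods is a period. -/
theorem ProperBorder.take_add_sub {a b : ℕ} (ha : ProperBorder (u.take a) u)
    (hb : ProperBorder (u.take b) u) (hab : u.length < a + b) :
    ProperBorder (u.take (a + b - u.length)) u := by
  obtain ⟨-, ha, ha'⟩ := properBorder_take_iff.1 ha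
  obtain ⟨-, hb, hb'⟩ := properBorder_take_iff.1 hb
  refine properBorder_take_iff.2 ⟨by omega, by omega, fun d hd => ?_⟩
  rw [ha' d (by omega), hb' _ (by omega)]
  congr 1
  omega

theorem getElem?_eq_of_properBorder_take {p q : List α} (hlen : p.length = q.length)
    (hpb : {x | ProperBorder x p} = {x | ProperBorder x q}) (h : ProperBorder (p.take k) p)
    {d : ℕ} (hd : d < k ∨ p.length - k ≤ d) : q[d]? = p[d]? := by
  have hk := (properBorder_take_iff.1 h).2.1
  obtain ⟨⟨-, hpre, hsuf⟩, -⟩ : ProperBorder (p.take k) q := (Set.ext_iff.1 hpb _).1 h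
  obtain ⟨⟨-, -, hsuf'⟩, -⟩ := h
  rw [prefix_iff_eq_take, length_take_of_le hk.le] at hpre
  rw [suffix_iff_eq_drop, length_take_of_le hk.le, ← hlen] at hsuf
  rw [suffix_iff_eq_drop, length_take_of_le hk.le] at hsuf'
  rcases hd with hd | hd
  · rw [← getElem?_take_of_lt hd, ← hpre, getElem?_take_of_lt hd]
  · rw [← Nat.add_sub_cancel' hd, ← getElem?_drop, ← getElem?_drop, ← hsuf, hsuf']

end Borders

theorem ne_nil_of_ne_of_length_eq {p q : List α} (hne : p ≠ q) (hlen : p.length = q.length) :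
    q ≠ [] := by
  rintro rfl
  exact hne (length_eq_zero_iff.1 hlen)

section Replacement

variable [DecidableEq α] {p q w s t : List α}

theorem exists_replL_eq_of_infix (hq : q ≠ []) (h : q <:+: w) :
    ∃ s t, w = s ++ q ++ t ∧ (∀ j < s.length, ¬ OccursAt q w j) ∧
      replL q p w = s ++ p ++ t := by
  induction w with
  | nil => exact absurd (infix_nil.1 h) hq
  | cons a w ih =>
    by_cases hpre : q <+: a :: w
    · obtain ⟨t, ht⟩ := hpre
      refine ⟨[], t, ht.symm, by simp, ?_⟩
      rw [replL, if_pos ⟨t, ht⟩, ← ht, drop_left, nil_append]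
    · obtain ⟨s, t, rfl, hlm, hr⟩ := ih ((infix_cons_iff.1 h).resolve_left hpre)
      refine ⟨a :: s, t, rfl, fun j hj => ?_,
        by simp only [replL, if_neg hpre, hr, cons_append]⟩
      cases j with
      | zero => exact fun h0 => hpre (occursAt_zero_iff.1 h0)
      | succ j => exact occursAt_cons_succ.not.2 (hlm j (by simpa using hj))

theorem replR_append_of_rightmost (hp : p ≠ [])
    (h : ∀ j, s.length < j → ¬ OccursAt p (s ++ p ++ t) j) :
    replR p q (s ++ p ++ t) = s ++ q ++ t := by
  induction s with
  | nil =>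
    obtain ⟨a, p, rfl⟩ := exists_cons_of_ne_nil hp
    have hno : ¬ a :: p <:+: p ++ t := fun hin => by
      obtain ⟨j, hj⟩ := infix_iff_exists_occursAt.1 hin
      exact h (j + 1) (by simp) (occursAt_cons_succ.2 hj)
    simp [replR, hno]
  | cons a s ih =>
    have hin : p <:+: s ++ p ++ t := ⟨s, t, rfl⟩
    simp only [cons_append, replR, if_pos hin]
    rw [ih fun j hj => occursAt_cons_succ.not.1 (h (j + 1) (by simpa using hj))]

theorem length_replL (hlen : p.length = q.length) (w : List α) :
    (replL q p w).length = w.length := by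
  induction w with
  | nil => rfl
  | cons a w ih =>
    by_cases hpre : q <+: a :: w
    · simp only [replL, if_pos hpre, length_append, length_drop, hlen]
      have := hpre.length_le
      omega
    · simp only [replL, if_neg hpre, length_cons, ih]

end Replacement

def weight (r : α → ℕ) : List α → ℕ
  | [] => 0
  | a :: u => r a * 2 ^ u.length + weight r u

section Weight

variable {r : α → ℕ}

theorem weight_lt_two_pow (hr : ∀ a, r a ≤ 1) (w : List α) : weight r w < 2 ^ w.length := by
  induction w with
  | nil => simp [weight]
  | cons a u ih =>
    simp only [weight, length_cons, pow_succ]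
    nlinarith [hr a]

theorem weight_append (u v : List α) :
    weight r (u ++ v) = weight r u * 2 ^ v.length + weight r v := by
  induction u with
  | nil => simp [weight]
  | cons a u ih =>
    simp only [cons_append, weight, ih, length_append, pow_add]
    ring

variable [DecidableEq α] {p q : List α}

theorem exists_weight_lt (hne : p ≠ q) (hlen : p.length = q.length) :
    ∃ r : α → ℕ, weight r p < weight r q := by
  induction p generalizing q with
  | nil => exact absurd (length_eq_zero_iff.1 hlen.symm).symm hne
  | cons a p ih =>
    obtain ⟨b, q, rfl⟩ := exists_cons_of_ne_nil (ne_nil_of_ne_of_length_eq hne hlen)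
    simp only [length_cons, Nat.add_right_cancel_iff] at hlen
    by_cases hab : a = b
    · subst hab
      obtain ⟨r, hr⟩ := ih (fun h => hne (h ▸ rfl)) hlen
      exact ⟨r, by simp only [weight, hlen]; omega⟩
    · refine ⟨fun x => if x = b then 1 else 0, ?_⟩
      have := weight_lt_two_pow (r := fun x => if x = b then 1 else 0)
        (fun x => by split <;> omega) p
      simp only [weight, if_neg hab, ↓reduceIte, zero_mul, one_mul, zero_add, hlen] at this ⊢
      omega

theorem weight_replL_lt (hq : q ≠ []) (hlen : p.length = q.length) (hr : weight r p < weight r q)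
    {w : List α} (h : q <:+: w) : weight r (replL q p w) < weight r w := by
  obtain ⟨s, t, rfl, -, hrepl⟩ := exists_replL_eq_of_infix (p := p) hq h
  simp only [hrepl, weight_append, hlen]
  have := Nat.mul_lt_mul_of_pos_right hr (Nat.two_pow_pos t.length)
  nlinarith [Nat.two_pow_pos q.length]

end Weight

section PhiL

variable [DecidableEq α] {p q w : List α}

theorem exists_not_infix_iterate_replL (hne : p ≠ q) (hlen : p.length = q.length) (w : List α) :
    ∃ i, ¬ q <:+: (replL q p)^[i] w := by
  obtain ⟨r, hr⟩ := exists_weight_lt hne hlen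
  induction w using (measure (weight r)).wf.induction with
  | h w ih =>
    by_cases h : q <:+: w
    · obtain ⟨i, hi⟩ :=
        ih _ (weight_replL_lt (ne_nil_of_ne_of_length_eq hne hlen) hlen hr h)
      exact ⟨i + 1, hi⟩
    · exact ⟨0, h⟩

theorem not_infix_phiL (hne : p ≠ q) (hlen : p.length = q.length) (w : List α) :
    ¬ q <:+: phiL q p w :=
  Nat.sInf_mem (exists_not_infix_iterate_replL hne hlen w)

theorem length_phiL (hlen : p.length = q.length) (w : List α) :
    (phiL q p w).length = w.length := by
  unfold phiL
  generalize (sInf _ : ℕ) = k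
  induction k generalizing w with
  | zero => rfl
  | succ k ih => rw [Function.iterate_succ_apply, ih, length_replL hlen]

end PhiL

/-- The invariant of the `replL q p`-orbit of a word avoiding `p`. -/
def Admissible (q p w : List α) : Prop :=
  ∀ i j, OccursAt q w i → (∀ i' < i, ¬ OccursAt q w i') → OccursAt p w j → i < j →
    j < i + p.length ∧ ¬ ProperBorder (p.take (i + p.length - j)) p

section Admissible

variable {p q s t : List α} (hlen : p.length = q.length)
  (hpb : {x | ProperBorder x p} = {x | ProperBorder x q})
include hlen hpb

theorem occursAt_of_replace_right {j : ℕ} (h : OccursAt p (s ++ p ++ t) j) (hj : s.length < j) :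
    OccursAt p (s ++ q ++ t) j := by
  refine h.append_congr hlen fun d hd hjd _ => ?_
  have hb := occursAt_append.properBorder_take h hj (by omega)
  exact (getElem?_eq_of_properBorder_take hlen hpb hb (by omega)).symm

theorem occursAt_of_replace_left {i : ℕ} (h : OccursAt q (s ++ p ++ t) i)
    (hb : s.length < i + p.length → ProperBorder (p.take (i + p.length - s.length)) p) :
    OccursAt q (s ++ q ++ t) i := by
  refine h.append_congr hlen fun d _ _ hdi => ?_
  exact (getElem?_eq_of_properBorder_take hlen hpb (hb (by omega)) (by omega)).symm

variable (hadm : Admissible q p (s ++ q ++ t))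
  (hlm : ∀ i < s.length, ¬ OccursAt q (s ++ q ++ t) i)
include hadm hlm

theorem not_occursAt_replace_right {j : ℕ} (hj : s.length < j) :
    ¬ OccursAt p (s ++ p ++ t) j := fun h =>
  have ⟨hlt, hnb⟩ :=
    hadm _ j occursAt_append hlm (occursAt_of_replace_right hlen hpb h hj) hj
  hnb (occursAt_append.properBorder_take h hj hlt)

theorem admissible_replace : Admissible q p (s ++ p ++ t) := by
  intro i j hi _ hj hij
  have hjs : j ≤ s.length :=
    not_lt.1 fun h => not_occursAt_replace_right hlen hpb hadm hlm h hj
  have hback : (s.length < i + p.length → ProperBorder (p.take (i + p.length - s.length)) p) →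
      False := fun hb => hlm i (by omega) (occursAt_of_replace_left hlen hpb hi hb)
  have hsi : s.length < i + p.length := by_contra fun h => hback (absurd · h)
  refine ⟨by omega, fun hb => hback fun _ => ?_⟩
  rcases hjs.lt_or_eq with hjs | rfl
  · have hb' := hj.properBorder_take occursAt_append hjs (by omega)
    have := hb.take_add_sub hb' (by omega)
    rwa [show i + p.length - j + (j + p.length - s.length) - p.length =
      i + p.length - s.length by omega] at this
  · exact hb

end Admissible

section Bijection

variable [DecidableEq α] {p q : List α} (hne : p ≠ q) (hlen : p.length = q.length)
include hne hlen

theorem Admissible.replL_step (hpb : {x | ProperBorder x p} = {x | ProperBorder x q})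
    {w : List α} (hadm : Admissible q p w) (h : q <:+: w) :
    Admissible q p (replL q p w) ∧ p <:+: replL q p w ∧ replR p q (replL q p w) = w := by
  obtain ⟨s, t, rfl, hlm, hrepl⟩ :=
    exists_replL_eq_of_infix (p := p) (ne_nil_of_ne_of_length_eq hne hlen) h
  rw [hrepl]
  exact ⟨admissible_replace hlen hpb hadm hlm, ⟨s, t, rfl⟩,
    replR_append_of_rightmost (ne_nil_of_ne_of_length_eq hne.symm hlen.symm)
      fun _ => not_occursAt_replace_right hlen hpb hadm hlm⟩

theorem phiR_phiL (hpb : {x | ProperBorder x p} = {x | ProperBorder x q}) {w : List α}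
    (hw : ¬ p <:+: w) : phiR p q (phiL q p w) = w :=
  Function.iterate_sInf_leftInverse (I := Admissible q p)
    (fun _ hadm => hadm.replL_step hne hlen hpb)
    (fun _ _ _ _ hj => absurd (infix_iff_exists_occursAt.2 ⟨_, hj⟩) hw) hw
    fun _ hi => not_not.1 (Nat.notMem_of_lt_sInf hi)

theorem mapsTo_phiL (n : ℕ) :
    Set.MapsTo (phiL q p) {w | w.length = n ∧ ¬ p <:+: w} {w | w.length = n ∧ ¬ q <:+: w} :=
  fun w hw => ⟨(length_phiL hlen w).trans hw.1, not_infix_phiL hne hlen w⟩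

theorem injOn_phiL (hpb : {x | ProperBorder x p} = {x | ProperBorder x q}) (n : ℕ) :
    Set.InjOn (phiL q p) {w | w.length = n ∧ ¬ p <:+: w} :=
  Set.LeftInvOn.injOn (f₁' := phiR p q) fun _ hw => phiR_phiL hne hlen hpb hw.2

end Bijection

end

/-- Main Theorem: if `p ≠ q` are equal-length words over a finite alphabet with the same
set of proper borders, then `phiL q p` is a bijection from the length-`n` words avoiding
`p` to the length-`n` words avoiding `q`. -/
theorem stmt_10 {α : Type*} [Fintype α] [DecidableEq α] {p q : List α}
    (hne : p ≠ q) (hlen : p.length = q.length)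
    (hpb : {x | ProperBorder x p} = {x | ProperBorder x q}) (n : ℕ) :
    Set.BijOn (phiL q p) {w : List α | w.length = n ∧ ¬ p <:+: w}
      {w : List α | w.length = n ∧ ¬ q <:+: w} := by
  have hfin (u : List α) : {w : List α | w.length = n ∧ ¬ u <:+: w}.Finite :=
    (List.finite_length_eq α n).subset fun _ hw => hw.1
  exact Set.bijOn_of_injOn_of_injOn (hfin p) (hfin q)
    (mapsTo_phiL hne hlen n) (injOn_phiL hne hlen hpb n)
    (mapsTo_phiL hne.symm hlen.symm n) (injOn_phiL hne.symm hlen.symm hpb.symm n)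
end

section
/- Let p and q be distinct equal-length words over a finite alphabet with equal sets of proper borders. Then for every n, the number of length-n words avoiding p equals the number of length-n words avoiding q. -/
/-!
Write `A n` for the number of words of length `n` avoiding `p`, and `C n` for the number of those
in which `p` occurs only as a suffix. Appending a letter to an avoider gives
`A n * |α| = A (n + 1) + C (n + 1)`. Appending `p` to an avoider `w` and cutting `w ++ p` right
after its first occurrence of `p` gives `A n = ∑ d ∈ B, C (n + d)`, where `B` is the set of border
lengths of `p` (including `|p|`): that occurrence overlaps the appended copy of `p` in a border.
For `n ≥ |p|` the second recurrence at `n - |p|` determines `C n` and then the first determines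
`A n` from smaller values, while for `n < |p|` neither depends on `p`. So `A` depends only on
`|α|`, `|p|` and `B`, and `B` is determined by `|p|` and the proper borders.
-/

open List

namespace List

variable {α : Type*} {p u v w : List α}

theorem IsSuffix.drop_length_sub (h : p <:+ u) {k : ℕ} (hk : k ≤ p.length) :
    u.drop (u.length - k) = p.drop (p.length - k) := by
  obtain ⟨t, rfl⟩ := h
  rw [length_append, show t.length + p.length - k = t.length + (p.length - k) by omega,
    drop_length_add_append]

theorem IsPrefix.take_eq_take (h : v <+: u) {n : ℕ} (hn : n ≤ v.length) : v.take n = u.take n := by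
  rw [prefix_iff_eq_take.mp h, take_take, min_eq_left hn]

theorem infix_dropLast_or_suffix (h : p <:+: u) : p <:+: u.dropLast ∨ p <:+ u := by
  obtain ⟨s, t, rfl⟩ := h
  rcases eq_or_ne t [] with rfl | ht
  · exact .inr (by simp)
  · left
    rw [← dropLast_append_getLast ht, ← append_assoc, dropLast_concat]
    exact ⟨s, t.dropLast, rfl⟩

def OccursOnlyAtEnd (p v : List α) : Prop := p <:+ v ∧ ¬ p <:+: v.dropLast

instance [DecidableEq α] : DecidablePred (OccursOnlyAtEnd p) :=
  fun _ => inferInstanceAs (Decidable (_ ∧ _))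

theorem occursOnlyAtEnd_iff_of_not_infix_dropLast (h : ¬ p <:+: u.dropLast) :
    OccursOnlyAtEnd p u ↔ p <:+: u :=
  ⟨fun h' => h'.1.isInfix, fun h' => ⟨(infix_dropLast_or_suffix h').resolve_left h, h⟩⟩

theorem exists_prefix_occursOnlyAtEnd (hp : p ≠ []) (h : p <:+: u) :
    ∃ v, v <+: u ∧ OccursOnlyAtEnd p v := by
  induction u using reverseRecOn with
  | nil => exact absurd (eq_nil_of_infix_nil h) hp
  | append_singleton u a ih =>
    by_cases hu : p <:+: u
    · obtain ⟨v, hv, hpv⟩ := ih hu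
      exact ⟨v, hv.trans (prefix_append u [a]), hpv⟩
    · refine ⟨u ++ [a], prefix_rfl, ?_⟩
      rw [occursOnlyAtEnd_iff_of_not_infix_dropLast (by rwa [dropLast_concat])]
      exact h

theorem OccursOnlyAtEnd.eq_of_prefix (hv : OccursOnlyAtEnd p v) (hw : OccursOnlyAtEnd p w)
    (hvu : v <+: u) (hwu : w <+: u) : v = w := by
  wlog hle : v.length ≤ w.length generalizing v w
  · exact (this hw hv hwu hvu (by omega)).symm
  rcases hle.lt_or_eq with hlt | heq
  · refine absurd (hv.1.isInfix.trans (IsPrefix.isInfix ?_)) hw.2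
    exact prefix_of_prefix_length_le hvu ((dropLast_prefix w).trans hwu) (by simp; omega)
  · exact (prefix_of_prefix_length_le hvu hwu hle).eq_of_length heq

end List

section Borders

variable {α : Type*} {p : List α}

theorem borderLengths_eq_insert (hp : p ≠ []) :
    borderLengths p = insert p.length (length '' {x | ProperBorder x p}) := by
  ext d
  simp only [borderLengths, ProperBorder, Set.mem_insert_iff, Set.mem_image, Set.mem_ofPred_eq]
  constructor
  · rintro ⟨x, hx, rfl⟩
    by_cases hxp : x = p
    · exact .inl (by rw [hxp])
    · exact .inr ⟨x, ⟨hx, hxp⟩, rfl⟩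
  · rintro (rfl | ⟨x, ⟨hx, -⟩, rfl⟩)
    · exact ⟨p, ⟨hp, prefix_rfl, suffix_rfl⟩, rfl⟩
    · exact ⟨x, hx, rfl⟩

variable [DecidableEq α]

def borderLengthsFinset (p : List α) : Finset ℕ :=
  (Finset.Icc 1 p.length).filter (fun d => p.take d = p.drop (p.length - d))

@[simp] theorem mem_borderLengthsFinset {d : ℕ} :
    d ∈ borderLengthsFinset p ↔ 1 ≤ d ∧ d ≤ p.length ∧ p.take d = p.drop (p.length - d) := by
  simp [borderLengthsFinset, and_assoc]

theorem length_mem_borderLengthsFinset (hp : p ≠ []) : p.length ∈ borderLengthsFinset p := by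
  simpa [Nat.one_le_iff_ne_zero] using hp

theorem coe_borderLengthsFinset (p : List α) :
    (borderLengthsFinset p : Set ℕ) = borderLengths p := by
  ext d
  simp only [Finset.mem_coe, mem_borderLengthsFinset, borderLengths, Border, Set.mem_ofPred_eq]
  constructor
  · rintro ⟨hd1, hdp, h⟩
    refine ⟨p.take d, ⟨?_, take_prefix d p, h ▸ drop_suffix _ p⟩, by simpa using hdp⟩
    rw [← length_pos_iff]
    simp; omega
  · rintro ⟨x, ⟨hx, hpre, hsuf⟩, rfl⟩
    exact ⟨length_pos_iff.mpr hx, hpre.length_le,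
      (prefix_iff_eq_take.mp hpre).symm.trans (suffix_iff_eq_drop.mp hsuf)⟩

theorem prefix_take_append_of_suffix {v : List α} {n d : ℕ} (hv : p <:+ v)
    (hlen : v.length = n + d) (hd : d ∈ borderLengthsFinset p) : v <+: v.take n ++ p := by
  rw [mem_borderLengthsFinset] at hd
  have hdrop : v.drop n = p.take d := by
    rw [show n = v.length - d by omega, hv.drop_length_sub hd.2.1, hd.2.2]
  calc v = v.take n ++ v.drop n := (take_append_drop n v).symm
    _ = v.take n ++ p.take d := by rw [hdrop]
    _ <+: v.take n ++ p := (prefix_append_right_inj _).2 (take_prefix d p)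

end Borders

section Counting

open Finset List

noncomputable def words (α : Type*) [Fintype α] (n : ℕ) : Finset (List α) :=
  (finite_length_eq α n).toFinset

@[simp] theorem mem_words {α : Type*} [Fintype α] {n : ℕ} {w : List α} :
    w ∈ words α n ↔ w.length = n := by
  simp [words]

variable {α : Type*} [Fintype α] [DecidableEq α] {p : List α}

noncomputable def avoiding (p : List α) (n : ℕ) : Finset (List α) :=
  (words α n).filter (¬ p <:+: ·)

noncomputable def onlyAtEnd (p : List α) (n : ℕ) : Finset (List α) :=
  (words α n).filter (OccursOnlyAtEnd p)

@[simp] theorem mem_avoiding {n : ℕ} {w : List α} :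
    w ∈ avoiding p n ↔ w.length = n ∧ ¬ p <:+: w := by
  simp [avoiding]

@[simp] theorem mem_onlyAtEnd {n : ℕ} {w : List α} :
    w ∈ onlyAtEnd p n ↔ w.length = n ∧ OccursOnlyAtEnd p w := by
  simp [onlyAtEnd]

theorem card_avoiding_mul_card (n : ℕ) :
    #(avoiding p n) * Fintype.card α = #((words α (n + 1)).filter (¬ p <:+: ·.dropLast)) := by
  rw [← card_univ, ← card_product]
  refine card_bij (fun x _ => x.1 ++ [x.2]) ?_ ?_ ?_
  · rintro ⟨w, a⟩ hx
    simp_all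
  · rintro ⟨w, a⟩ - ⟨w', a'⟩ - h
    simpa using append_inj' h rfl
  · intro u hu
    simp only [Finset.mem_filter, mem_words] at hu
    have hu0 : u ≠ [] := by rintro rfl; simp at hu
    refine ⟨(u.dropLast, u.getLast hu0), ?_, dropLast_append_getLast hu0⟩
    simp [hu.1, hu.2]

theorem card_avoiding_succ_add_card_onlyAtEnd (n : ℕ) :
    #(avoiding p (n + 1)) + #(onlyAtEnd p (n + 1)) = #(avoiding p n) * Fintype.card α := by
  rw [card_avoiding_mul_card,
    ← card_filter_add_card_filter_not (s := (words α (n + 1)).filter (¬ p <:+: ·.dropLast))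
      (p <:+: ·), add_comm]
  congr 2 <;> ext u <;> simp only [Finset.mem_filter, mem_words]
  · rw [mem_onlyAtEnd]
    exact ⟨fun ⟨hl, h⟩ => ⟨⟨hl, h.2⟩, h.1.isInfix⟩,
      fun ⟨⟨hl, hd⟩, h⟩ => ⟨hl, (occursOnlyAtEnd_iff_of_not_infix_dropLast hd).2 h⟩⟩
  · rw [mem_avoiding]
    exact ⟨fun ⟨hl, h⟩ => ⟨⟨hl, fun h' => h (h'.trans (dropLast_prefix u).isInfix)⟩, h⟩,
      fun ⟨⟨hl, _⟩, h⟩ => ⟨hl, h⟩⟩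

theorem card_avoiding_eq_sum (hp : p ≠ []) (n : ℕ) :
    #(avoiding p n) = ∑ d ∈ borderLengthsFinset p, #(onlyAtEnd p (n + d)) := by
  rw [← card_sigma]
  symm
  refine card_bij (fun x _ => x.2.take n) ?_ ?_ ?_
  · rintro ⟨d, v⟩ hx
    simp only [Finset.mem_sigma, mem_onlyAtEnd, mem_borderLengthsFinset] at hx
    obtain ⟨⟨hd1, -, -⟩, hvl, -, hvp⟩ := hx
    refine mem_avoiding.2 ⟨by simp [hvl], fun h => hvp (h.trans (IsPrefix.isInfix ?_))⟩
    exact prefix_of_prefix_length_le (take_prefix n v) (dropLast_prefix v) (by simp; omega)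
  · rintro ⟨d, v⟩ hx ⟨d', v'⟩ hx' h
    simp only [Finset.mem_sigma, mem_onlyAtEnd] at hx hx'
    dsimp only at h
    have hvu := prefix_take_append_of_suffix hx.2.2.1 hx.2.1 hx.1
    have hvu' := prefix_take_append_of_suffix hx'.2.2.1 hx'.2.1 hx'.1
    rw [← h] at hvu'
    obtain rfl := hx.2.2.eq_of_prefix hx'.2.2 hvu hvu'
    obtain rfl : d = d' := by omega
    rfl
  · intro w hw
    rw [mem_avoiding] at hw
    obtain ⟨v, hvu, hv⟩ := exists_prefix_occursOnlyAtEnd hp (suffix_append w p).isInfix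
    have hnv : n < v.length := by
      by_contra! h
      refine hw.2 (hv.1.isInfix.trans (IsPrefix.isInfix ?_))
      exact prefix_of_prefix_length_le hvu (prefix_append w p) (by omega)
    have hvL : v.length ≤ n + p.length := by simpa [hw.1] using hvu.length_le
    have hvd : v.drop n = p.take (v.length - n) := by
      conv_lhs => rw [prefix_iff_eq_take.mp hvu, drop_take, ← hw.1, drop_left]
      rw [hw.1]
    refine ⟨⟨v.length - n, v⟩, ?_, ?_⟩
    · simp only [Finset.mem_sigma, mem_onlyAtEnd, mem_borderLengthsFinset]
      refine ⟨⟨by omega, by omega, ?_⟩, by omega, hv⟩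
      rw [← hvd, ← hv.1.drop_length_sub (k := v.length - n) (by omega), Nat.sub_sub_self hnv.le]
    · rw [hvu.take_eq_take hnv.le, ← hw.1, take_left]

theorem avoiding_of_lt_length {n : ℕ} (h : n < p.length) : avoiding p n = words α n :=
  filter_true_of_mem fun w hw hpw => by
    have := hpw.length_le
    rw [mem_words] at hw
    omega

theorem onlyAtEnd_of_lt_length {n : ℕ} (h : n < p.length) : onlyAtEnd p n = ∅ :=
  filter_false_of_mem fun w hw hpw => by
    have := hpw.1.length_le
    rw [mem_words] at hw
    omega

theorem coe_avoiding (p : List α) (n : ℕ) :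
    (avoiding p n : Set (List α)) = {w | w.length = n ∧ ¬ p <:+: w} := by
  ext w
  simp

theorem card_avoiding_eq_and_card_onlyAtEnd_eq {q : List α} (hp : p ≠ []) (hq : q ≠ [])
    (hlen : p.length = q.length) (hB : borderLengthsFinset p = borderLengthsFinset q) (n : ℕ) :
    #(avoiding p n) = #(avoiding q n) ∧ #(onlyAtEnd p n) = #(onlyAtEnd q n) := by
  have hL : 0 < p.length := length_pos_iff.mpr hp
  induction n using Nat.strong_induction_on with
  | _ n ih =>
  rcases lt_or_ge n p.length with hn | hn
  · rw [avoiding_of_lt_length hn, avoiding_of_lt_length (hlen ▸ hn), onlyAtEnd_of_lt_length hn,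
      onlyAtEnd_of_lt_length (hlen ▸ hn)]
    exact ⟨rfl, rfl⟩
  have hC : #(onlyAtEnd p n) = #(onlyAtEnd q n) := by
    have hsum := card_avoiding_eq_sum hp (n - p.length)
    have hsum' := card_avoiding_eq_sum hq (n - p.length)
    rw [← hB] at hsum'
    rw [← sum_erase_add _ _ (length_mem_borderLengthsFinset hp), Nat.sub_add_cancel hn]
      at hsum hsum'
    have hlower : ∑ d ∈ (borderLengthsFinset p).erase p.length, #(onlyAtEnd p (n - p.length + d))
        = ∑ d ∈ (borderLengthsFinset p).erase p.length, #(onlyAtEnd q (n - p.length + d)) := by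
      refine sum_congr rfl fun d hd => (ih _ ?_).2
      rw [mem_erase, mem_borderLengthsFinset] at hd
      omega
    have hA := (ih (n - p.length) (by omega)).1
    omega
  have hstep := card_avoiding_succ_add_card_onlyAtEnd (p := p) (n - 1)
  have hstep' := card_avoiding_succ_add_card_onlyAtEnd (p := q) (n - 1)
  rw [Nat.sub_add_cancel (by omega)] at hstep hstep'
  have hA := (ih (n - 1) (by omega)).1
  rw [hA] at hstep
  exact ⟨by omega, hC⟩

end Counting

theorem stmt_11_general {α : Type*} [Fintype α] {p q : List α}
    (hlen : p.length = q.length)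
    (hpb : {x | ProperBorder x p} = {x | ProperBorder x q}) (n : ℕ) :
    {w : List α | w.length = n ∧ ¬ p <:+: w}.ncard =
      {w : List α | w.length = n ∧ ¬ q <:+: w}.ncard := by
  classical
  rcases eq_or_ne p [] with rfl | hp
  · obtain rfl : q = [] := length_eq_zero_iff.mp hlen.symm
    rfl
  have hq : q ≠ [] := ne_nil_of_length_pos (hlen ▸ length_pos_iff.mpr hp)
  have hB : borderLengthsFinset p = borderLengthsFinset q := by
    rw [← Finset.coe_inj, coe_borderLengthsFinset, coe_borderLengthsFinset,
      borderLengths_eq_insert hp, borderLengths_eq_insert hq, hpb, hlen]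
  rw [← coe_avoiding, ← coe_avoiding, Set.ncard_coe_finset, Set.ncard_coe_finset]
  exact (card_avoiding_eq_and_card_onlyAtEnd_eq hp hq hlen hB n).1

/-- If `p ≠ q` are equal-length words over a finite alphabet with the same set of proper
borders, then the number of length-`n` words avoiding `p` equals the number of length-`n`
words avoiding `q`. -/
theorem stmt_11 {α : Type*} [Fintype α] [DecidableEq α] {p q : List α}
    (hne : p ≠ q) (hlen : p.length = q.length)
    (hpb : {x | ProperBorder x p} = {x | ProperBorder x q}) (n : ℕ) :
    {w : List α | w.length = n ∧ ¬ p <:+: w}.ncard =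
      {w : List α | w.length = n ∧ ¬ q <:+: w}.ncard :=
  stmt_11_general hlen hpb n
end

section
/- Let p and q be distinct equal-length words over a finite alphabet with equal sets of proper borders, and let φ_L be the iterated leftmost-replacement map from words avoiding p to words avoiding q. If w avoids both p and q, then φ_L(w) = w. Consequently, φ_L restricts to a bijection from {length-n words avoiding p and containing q} to {length-n words avoiding q and containing p}. -/
open List

namespace Stmt12Aux

set_option linter.unusedSectionVars false

variable {α : Type*}

/-- `u` occurs in `x` at position `i`. -/
def OccAt (u x : List α) (i : ℕ) : Prop :=
  i + u.length ≤ x.length ∧ ∀ k < u.length, x[i+k]? = u[k]?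

/-- `u` has period `t`. -/
def HasPeriod (u : List α) (t : ℕ) : Prop := ∀ k, k + t < u.length → u[k+t]? = u[k]?

theorem hasPeriod_add {u : List α} {d e : ℕ} (hd : HasPeriod u d) (he : HasPeriod u e) :
    HasPeriod u (d + e) := by
  intro k hk
  have h1 := hd (k + e) (by omega)
  have h2 := he k (by omega)
  have hre : k + (d + e) = k + e + d := by omega
  rw [hre, h1, h2]

theorem eq_take_append_drop {u x : List α} {i : ℕ} (h : OccAt u x i) :
    x = x.take i ++ u ++ x.drop (i + u.length) := by
  obtain ⟨hle, hpt⟩ := h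
  apply List.ext_getElem?
  intro k
  have hti : (x.take i).length = i := by rw [List.length_take]; omega
  by_cases h1 : k < i
  · rw [List.append_assoc, List.getElem?_append_left (by omega)]
    rw [List.getElem?_take_of_lt h1]
  · by_cases h2 : k < i + u.length
    · rw [List.append_assoc, List.getElem?_append_right (by omega), hti]
      rw [List.getElem?_append_left (by omega)]
      have h3 : k = i + (k - i) := by omega
      rw [h3, hpt (k - i) (by omega)]
      congr 1
      omega
    · rw [List.append_assoc, List.getElem?_append_right (by omega), hti]
      rw [List.getElem?_append_right (by omega)]
      simp only [List.getElem?_drop]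
      congr 1
      omega

theorem occAt_iff_exists {u x : List α} {i : ℕ} :
    OccAt u x i ↔ ∃ s t, x = s ++ u ++ t ∧ s.length = i := by
  constructor
  · intro h
    exact ⟨x.take i, x.drop (i + u.length), eq_take_append_drop h,
      by rw [List.length_take]; have := h.1; omega⟩
  · rintro ⟨s, t, rfl, rfl⟩
    constructor
    · simp
    · intro k hk
      rw [List.append_assoc, List.getElem?_append_right (by omega)]
      simp only [Nat.add_sub_cancel_left]
      rw [List.getElem?_append_left hk]

theorem infix_iff_occAt {u x : List α} : u <:+: x ↔ ∃ i, OccAt u x i := by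
  constructor
  · rintro ⟨s, t, rfl⟩
    exact ⟨s.length, occAt_iff_exists.mpr ⟨s, t, rfl, rfl⟩⟩
  · rintro ⟨i, h⟩
    obtain ⟨s, t, rfl, -⟩ := occAt_iff_exists.mp h
    exact ⟨s, t, rfl⟩

theorem occAt_zero_iff_prefix {u x : List α} : OccAt u x 0 ↔ u <+: x := by
  rw [occAt_iff_exists]
  constructor
  · rintro ⟨s, t, rfl, hs⟩
    rw [List.length_eq_zero_iff] at hs
    subst hs
    exact ⟨t, by simp⟩
  · rintro ⟨t, rfl⟩
    exact ⟨[], t, by simp, rfl⟩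

theorem occAt_cons_succ {u x : List α} {a : α} {i : ℕ} :
    OccAt u (a :: x) (i + 1) ↔ OccAt u x i := by
  rw [occAt_iff_exists, occAt_iff_exists]
  constructor
  · rintro ⟨s, t, hx, hs⟩
    match s, hs with
    | b :: s, hs =>
      simp only [List.cons_append, List.cons.injEq] at hx
      exact ⟨s, t, hx.2, by simpa using hs⟩
  · rintro ⟨s, t, hx, hs⟩
    exact ⟨a :: s, t, by simp [hx], by simp [hs]⟩

theorem exists_minOcc {u x : List α} (h : u <:+: x) :
    ∃ i, OccAt u x i ∧ ∀ j < i, ¬ OccAt u x j := by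
  obtain ⟨i, hi⟩ := infix_iff_occAt.mp h
  classical
  have hne : {j | OccAt u x j}.Nonempty := ⟨i, hi⟩
  refine ⟨sInf {j | OccAt u x j}, Nat.sInf_mem hne, fun j hj => ?_⟩
  exact Nat.notMem_of_lt_sInf hj

theorem exists_maxOcc {u x : List α} (h : u <:+: x) :
    ∃ i, OccAt u x i ∧ ∀ j, i < j → ¬ OccAt u x j := by
  obtain ⟨i, hi⟩ := infix_iff_occAt.mp h
  classical
  have hbdd : BddAbove {j | OccAt u x j} := ⟨x.length, fun j hj => by have := hj.1; omega⟩
  have hne : {j | OccAt u x j}.Nonempty := ⟨i, hi⟩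
  refine ⟨sSup {j | OccAt u x j}, Nat.sSup_mem hne hbdd, fun j hj hocc => ?_⟩
  exact absurd (le_csSup hbdd hocc) (by omega)

/-- Replace the length-`m` factor of `x` at position `i` by `p`. -/
def splice (x : List α) (i m : ℕ) (p : List α) : List α :=
  x.take i ++ p ++ x.drop (i + m)

theorem length_splice {x p : List α} {i m : ℕ} (h : i + m ≤ x.length)
    (hm : p.length = m) : (splice x i m p).length = x.length := by
  simp [splice]; omega

theorem getElem?_splice_lt {x p : List α} {i m k : ℕ} (h : i + m ≤ x.length)
    (hk : k < i) : (splice x i m p)[k]? = x[k]? := by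
  rw [splice, List.append_assoc, List.getElem?_append_left (by rw [List.length_take]; omega)]
  exact List.getElem?_take_of_lt hk

theorem getElem?_splice_mid {x p : List α} {i m k : ℕ} (h : i + m ≤ x.length)
    (hk : k < p.length) : (splice x i m p)[i + k]? = p[k]? := by
  rw [splice, List.append_assoc, List.getElem?_append_right (by rw [List.length_take]; omega)]
  rw [List.length_take, List.getElem?_append_left (by omega)]
  congr 1
  omega

theorem getElem?_splice_ge {x p : List α} {i m k : ℕ} (h : i + m ≤ x.length)
    (hm : p.length = m) (hk : i + m ≤ k) : (splice x i m p)[k]? = x[k]? := by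
  rw [splice, List.append_assoc, List.getElem?_append_right (by rw [List.length_take]; omega)]
  rw [List.length_take, List.getElem?_append_right (by omega)]
  simp only [List.getElem?_drop]
  congr 1
  omega

theorem occAt_splice {x p : List α} {i m : ℕ} (h : i + m ≤ x.length) :
    OccAt p (splice x i m p) i :=
  occAt_iff_exists.mpr ⟨x.take i, x.drop (i + m), by simp [splice], by rw [List.length_take]; omega⟩

variable [DecidableEq α]

theorem replL_eq_of_not {q p w : List α} (h : ¬ q <:+: w) : replL q p w = w := by
  induction w with
  | nil => rfl
  | cons a w ih =>
    rw [replL, if_neg (fun hp => h hp.isInfix), ih (fun hi => h (List.infix_cons hi))]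

theorem replL_eq_splice {q p w : List α} {i : ℕ} (hq : q ≠ [])
    (hocc : OccAt q w i) (hmin : ∀ j < i, ¬ OccAt q w j) :
    replL q p w = splice w i q.length p := by
  induction w generalizing i with
  | nil =>
    exfalso
    have h1 := hocc.1
    have h2 : q.length ≠ 0 := fun h => hq (List.length_eq_zero_iff.mp h)
    rw [List.length_nil] at h1
    omega
  | cons a w ih =>
    by_cases hpre : q <+: (a :: w)
    · have hi : i = 0 := by
        by_contra hne0
        exact hmin 0 (by omega) (occAt_zero_iff_prefix.mpr hpre)
      subst hi
      rw [replL, if_pos hpre, splice]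
      simp
    · have hi : i ≠ 0 := fun h => hpre (occAt_zero_iff_prefix.mp (h ▸ hocc))
      obtain ⟨i, rfl⟩ := Nat.exists_eq_succ_of_ne_zero hi
      rw [replL, if_neg hpre,
        ih (occAt_cons_succ.mp hocc) (fun j hj hoj => hmin (j+1) (by omega) (occAt_cons_succ.mpr hoj))]
      rw [splice, splice]
      simp [List.take_succ_cons, List.drop_succ_cons, Nat.succ_add]

theorem replR_eq_of_not {p q w : List α} (h : ¬ p <:+: w) : replR p q w = w := by
  induction w with
  | nil => rfl
  | cons a w ih =>
    have hnt : ¬ p <:+: w := fun hi => h (List.infix_cons hi)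
    rw [replR, if_neg hnt, if_neg (fun hp => h hp.isInfix)]

theorem replR_eq_splice {p q w : List α} {i : ℕ} (hp : p ≠ [])
    (hocc : OccAt p w i) (hmax : ∀ j, i < j → ¬ OccAt p w j) :
    replR p q w = splice w i p.length q := by
  induction w generalizing i with
  | nil =>
    exfalso
    have h1 := hocc.1
    have h2 : p.length ≠ 0 := fun h => hp (List.length_eq_zero_iff.mp h)
    rw [List.length_nil] at h1
    omega
  | cons a w ih =>
    by_cases htail : p <:+: w
    · have hi : i ≠ 0 := by
        obtain ⟨j, hj⟩ := infix_iff_occAt.mp htail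
        intro h0
        exact hmax (j + 1) (by omega) (occAt_cons_succ.mpr hj)
      obtain ⟨i, rfl⟩ := Nat.exists_eq_succ_of_ne_zero hi
      rw [replR, if_pos htail,
        ih (occAt_cons_succ.mp hocc) (fun j hj hoj => hmax (j+1) (by omega) (occAt_cons_succ.mpr hoj))]
      rw [splice, splice]
      simp [Nat.succ_add]
    · have hi : i = 0 := by
        by_contra hne0
        obtain ⟨j, rfl⟩ := Nat.exists_eq_succ_of_ne_zero hne0
        exact htail (infix_iff_occAt.mpr ⟨j, occAt_cons_succ.mp hocc⟩)
      subst hi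
      have hpre : p <+: (a :: w) := occAt_zero_iff_prefix.mp hocc
      rw [replR, if_neg htail, if_pos hpre, splice]
      simp

section Borders

theorem border_of_period {u : List α} {ℓ : ℕ} (h0 : 0 < ℓ) (hl : ℓ < u.length)
    (hp : HasPeriod u (u.length - ℓ)) : ProperBorder (u.take ℓ) u := by
  have hlen : (u.take ℓ).length = ℓ := by rw [List.length_take]; omega
  have hsuf : u.drop (u.length - ℓ) = u.take ℓ := by
    apply List.ext_getElem?
    intro k
    by_cases hk : k < ℓ
    · rw [List.getElem?_drop, List.getElem?_take_of_lt hk]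
      rw [show u.length - ℓ + k = k + (u.length - ℓ) by omega]
      exact hp k (by omega)
    · rw [List.getElem?_eq_none (by rw [List.length_drop]; omega),
        List.getElem?_eq_none (by omega)]
  refine ⟨⟨?_, List.take_prefix ℓ u, ?_⟩, ?_⟩
  · intro h
    rw [h] at hlen
    simp at hlen
    omega
  · rw [← hsuf]; exact List.drop_suffix _ u
  · intro h
    rw [h] at hlen
    omega

theorem period_of_border {x u : List α} (h : ProperBorder x u) :
    0 < x.length ∧ x.length < u.length ∧ HasPeriod u (u.length - x.length) ∧
      ∀ k < x.length, u[k]? = x[k]? := by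
  obtain ⟨⟨hne, hpre, hsuf⟩, hnequ⟩ := h
  have h0 : 0 < x.length := List.length_pos_iff.mpr hne
  have hle : x.length ≤ u.length := hpre.length_le
  have hlt : x.length < u.length := by
    rcases lt_or_eq_of_le hle with h | h
    · exact h
    · exact absurd (hpre.eq_of_length h) hnequ
  obtain ⟨t, ht⟩ := hpre
  obtain ⟨s, hs⟩ := hsuf
  have hslen : s.length = u.length - x.length := by
    have : s.length + x.length = u.length := by rw [← hs]; simp
    omega
  have hpref : ∀ k < x.length, u[k]? = x[k]? := by
    intro k hk
    rw [← ht, List.getElem?_append_left (by omega)]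
  set n₀ := u.length - x.length with hn0
  have hsuff : ∀ k < x.length, u[n₀ + k]? = x[k]? := by
    intro k hk
    rw [← hs, List.getElem?_append_right (by omega), hslen]
    congr 1
    omega
  refine ⟨h0, hlt, ?_, hpref⟩
  intro k hk
  have h1 := hsuff k (by omega)
  rw [show n₀ + k = k + n₀ by omega] at h1
  rw [h1, hpref k (by omega)]

end Borders

section Core

variable {p q : List α} (hne : p ≠ q) (hlen : p.length = q.length)
  (hpb : {x | ProperBorder x p} = {x | ProperBorder x q})

include hne hlen in
theorem plen_pos : 0 < p.length := by
  rcases Nat.eq_zero_or_pos p.length with h | h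
  · exfalso
    apply hne
    rw [List.length_eq_zero_iff.mp h, (List.length_eq_zero_iff.mp (hlen ▸ h.symm).symm : q = [])]
  · exact h

include hlen hpb in
theorem transfer {ℓ : ℕ} (h0 : 0 < ℓ) (hl : ℓ < p.length)
    (hper : HasPeriod p (p.length - ℓ)) :
    HasPeriod q (q.length - ℓ) ∧ ∀ k < ℓ, p[k]? = q[k]? := by
  have hb : ProperBorder (p.take ℓ) p := border_of_period h0 hl hper
  have hbq : ProperBorder (p.take ℓ) q := by
    have := Set.ext_iff.mp hpb (p.take ℓ)
    exact this.mp hb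
  obtain ⟨-, -, hqper, hqpt⟩ := period_of_border hbq
  have hlt : (p.take ℓ).length = ℓ := by rw [List.length_take]; omega
  rw [hlt] at hqper hqpt
  refine ⟨hqper, fun k hk => ?_⟩
  rw [hqpt k hk, List.getElem?_take_of_lt hk]

/-- The invariant: every occurrence of `p` strictly to the right of the leftmost
occurrence of `q` overlaps it and the overlap offset is not a period of `p`. -/
def Inv (p q x : List α) : Prop :=
  ∀ i j, OccAt q x i → (∀ i' < i, ¬ OccAt q x i') → OccAt p x j → i < j →
    j < i + p.length ∧ ¬ HasPeriod p (j - i)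

include hne hlen hpb in
theorem no_p_right {x : List α} {i : ℕ} (hqx : OccAt q x i)
    (hmin : ∀ i' < i, ¬ OccAt q x i') (hinv : Inv p q x) :
    ∀ j, OccAt p (splice x i q.length p) j → j ≤ i := by
  intro j hj
  by_contra hgt
  push_neg at hgt
  have hn := plen_pos hne hlen
  have hxlen' : (splice x i q.length p).length = x.length := length_splice hqx.1 hlen
  have hjn : j + p.length ≤ x.length := by rw [← hxlen']; exact hj.1
  have hiq := hqx.1
  set d := j - i with hd
  by_cases hcase : p.length ≤ d
  · have hocc : OccAt p x j := by
      refine ⟨by omega, fun k hk => ?_⟩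
      rw [← getElem?_splice_ge hqx.1 hlen (by omega)]
      exact hj.2 k hk
    have := (hinv i j hqx hmin hocc (by omega)).1
    omega
  · push_neg at hcase
    have hper : HasPeriod p d := by
      intro k hk
      have e1 : (splice x i q.length p)[i + (d + k)]? = p[d+k]? :=
        getElem?_splice_mid hqx.1 (by omega)
      have e2 := hj.2 k (by omega)
      rw [show i + (d + k) = j + k by omega] at e1
      rw [e2] at e1
      rw [show k + d = d + k by omega]
      exact e1.symm
    have hocc : OccAt p x j := by
      refine ⟨by omega, fun k hk => ?_⟩
      by_cases hk2 : j + k < i + p.length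
      · have e1 := hqx.2 (d + k) (by omega)
        rw [show i + (d+k) = j + k by omega] at e1
        obtain ⟨hqper, hpq⟩ := transfer hlen hpb (ℓ := p.length - d) (by omega) (by omega)
          (by rw [show p.length - (p.length - d) = d by omega]; exact hper)
        rw [show q.length - (p.length - d) = d by omega] at hqper
        have e2 := hqper k (by omega)
        have e3 := hpq k (by omega)
        rw [e1, show d + k = k + d by omega, e2, ← e3]
      · rw [← getElem?_splice_ge hqx.1 hlen (by omega)]
        exact hj.2 k hk
    exact absurd hper (hinv i j hqx hmin hocc (by omega)).2

theorem occAt_q_orig {x : List α} {i i' : ℕ} (hqx : OccAt q x i) (h1 : i' < i)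
    (hper : HasPeriod q (i - i')) (hocc' : OccAt q (splice x i q.length p) i') :
    OccAt q x i' := by
  have hiq := hqx.1
  set f := i - i' with hf
  refine ⟨by omega, fun k hk => ?_⟩
  by_cases hc : i' + k < i
  · rw [← getElem?_splice_lt hiq hc]
    exact hocc'.2 k hk
  · have e1 := hqx.2 (k - f) (by omega)
    rw [show i + (k - f) = i' + k by omega] at e1
    have e2 := hper (k - f) (by omega)
    rw [show k - f + f = k by omega] at e2
    rw [e1]
    exact e2.symm

include hne hlen hpb in
theorem inv_splice {x : List α} {i : ℕ} (hqx : OccAt q x i)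
    (hmin : ∀ i' < i, ¬ OccAt q x i') (hinv : Inv p q x) :
    Inv p q (splice x i q.length p) := by
  intro i₂ j ho₂ hmin₂ hj hij
  have hn := plen_pos hne hlen
  have hj_le : j ≤ i := no_p_right hne hlen hpb hqx hmin hinv j hj
  have hi₂_lt : i₂ < i := lt_of_lt_of_le hij hj_le
  have hbig : i < i₂ + p.length := by
    by_contra hle
    push_neg at hle
    have : OccAt q x i₂ := by
      refine ⟨by have := hqx.1; omega, fun k hk => ?_⟩
      rw [← getElem?_splice_lt hqx.1 (show i₂ + k < i by omega)]
      exact ho₂.2 k hk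
    exact hmin i₂ hi₂_lt this
  refine ⟨by omega, fun hperd => ?_⟩
  have hperf : HasPeriod p (i - i₂) := by
    rcases eq_or_lt_of_le hj_le with rfl | hjlt
    · exact hperd
    · have hpi : OccAt p (splice x i q.length p) i := occAt_splice hqx.1
      have hpere : HasPeriod p (i - j) := by
        intro k hk
        have e1 := hpi.2 k (by omega)
        have e2 := hj.2 (k + (i - j)) (by omega)
        rw [show j + (k + (i - j)) = i + k by omega] at e2
        exact e2.symm.trans e1
      have := hasPeriod_add hperd hpere
      rwa [show j - i₂ + (i - j) = i - i₂ by omega] at this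
  obtain ⟨hqper, -⟩ := transfer hlen hpb (ℓ := p.length - (i - i₂)) (by omega) (by omega)
    (by rw [show p.length - (p.length - (i - i₂)) = i - i₂ by omega]; exact hperf)
  rw [show q.length - (p.length - (i - i₂)) = i - i₂ by omega] at hqper
  exact hmin i₂ hi₂_lt (occAt_q_orig hqx hi₂_lt hqper ho₂)

end Core

section Step

variable [DecidableEq α] {p q : List α} (hne : p ≠ q) (hlen : p.length = q.length)
  (hpb : {x | ProperBorder x p} = {x | ProperBorder x q})

include hne hlen hpb in
theorem step_main {x : List α} {i : ℕ} (hqx : OccAt q x i)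
    (hmin : ∀ i' < i, ¬ OccAt q x i') (hinv : Inv p q x) :
    replL q p x = splice x i q.length p ∧ Inv p q (splice x i q.length p) ∧
    OccAt p (splice x i q.length p) i ∧ replR p q (splice x i q.length p) = x ∧
    (splice x i q.length p).length = x.length := by
  have hn := plen_pos hne hlen
  have hq0 : q ≠ [] := fun h => by rw [h, List.length_nil] at hlen; omega
  have hp0 : p ≠ [] := fun h => by rw [h] at hn; simp at hn
  refine ⟨replL_eq_splice hq0 hqx hmin, inv_splice hne hlen hpb hqx hmin hinv,
    occAt_splice hqx.1, ?_, length_splice hqx.1 hlen⟩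
  have hmax : ∀ j, i < j → ¬ OccAt p (splice x i q.length p) j := fun j hj hocc =>
    absurd (no_p_right hne hlen hpb hqx hmin hinv j hocc) (by omega)
  rw [replR_eq_splice hp0 (occAt_splice hqx.1) hmax]
  have h1 : (x.take i).length = i := by rw [List.length_take]; have := hqx.1; omega
  have e1 : (x.take i ++ p ++ x.drop (i+q.length)).take i = x.take i := by
    rw [List.append_assoc]; exact List.take_left' h1
  have e2 : (x.take i ++ p ++ x.drop (i+q.length)).drop (i + p.length) = x.drop (i + q.length) :=
    List.drop_left' (by rw [List.length_append, h1])
  rw [splice, splice, e1, e2]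
  exact (eq_take_append_drop hqx).symm

include hne hlen hpb in
theorem iter_facts {w : List α} (hw : ¬ p <:+: w) :
    ∀ m, (∀ m' < m, q <:+: (replL q p)^[m'] w) →
      Inv p q ((replL q p)^[m] w) ∧ ((replL q p)^[m] w).length = w.length ∧
      (0 < m → p <:+: (replL q p)^[m] w ∧
        replR p q ((replL q p)^[m] w) = (replL q p)^[m-1] w) := by
  intro m
  induction m with
  | zero =>
    intro _
    refine ⟨?_, rfl, by omega⟩
    intro i j hqi hmin hpj hij
    exact absurd (infix_iff_occAt.mpr ⟨j, hpj⟩) hw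
  | succ m ih =>
    intro hall
    obtain ⟨hinv, hlenm, -⟩ := ih (fun m' hm' => hall m' (by omega))
    obtain ⟨i, hi, hmin⟩ := exists_minOcc (hall m (by omega))
    obtain ⟨hrepl, hinv', hocc', hR, hlen'⟩ := step_main hne hlen hpb hi hmin hinv
    have hit : (replL q p)^[m+1] w = splice ((replL q p)^[m] w) i q.length p := by
      rw [Function.iterate_succ_apply', hrepl]
    refine ⟨hit ▸ hinv', by rw [hit, hlen', hlenm], fun _ => ?_⟩
    refine ⟨hit ▸ infix_iff_occAt.mpr ⟨i, hocc'⟩, ?_⟩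
    rw [hit, hR]
    simp

end Step

section Master

variable [DecidableEq α] [Fintype α] {p q : List α} (hne : p ≠ q)
  (hlen : p.length = q.length)
  (hpb : {x | ProperBorder x p} = {x | ProperBorder x q})

theorem phiL_eq_self {w : List α} (h : ¬ q <:+: w) : phiL q p w = w := by
  have h0 : sInf {i | ¬ q <:+: (replL q p)^[i] w} = 0 :=
    Nat.sInf_eq_zero.mpr (Or.inl h)
  rw [phiL, h0]
  rfl

include hne hlen hpb in
theorem terminates {w : List α} (hw : ¬ p <:+: w) :
    {i | ¬ q <:+: (replL q p)^[i] w}.Nonempty := by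
  by_contra hempty
  have hall : ∀ m, q <:+: (replL q p)^[m] w := by
    intro m
    by_contra hm
    exact hempty ⟨m, hm⟩
  have hfacts := fun m => iter_facts hne hlen hpb hw m (fun m' _ => hall m')
  have hmaps : Set.MapsTo (fun m => (replL q p)^[m] w) (Set.univ : Set ℕ)
      {l : List α | l.length = w.length} := fun m _ => (hfacts m).2.1
  obtain ⟨a, -, b, -, hab, heq⟩ := Set.Infinite.exists_ne_map_eq_of_mapsTo
    Set.infinite_univ hmaps (List.finite_length_eq α w.length)
  wlog hlt : a < b generalizing a b
  · exact this b a hab.symm heq.symm (by omega)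
  have hpeel : ∀ c d : ℕ, (replL q p)^[c] w = (replL q p)^[c + d] w → w = (replL q p)^[d] w := by
    intro c
    induction c with
    | zero => intro d h; simpa using h
    | succ c ihc =>
      intro d h
      have h1 := ((hfacts (c+1)).2.2 (by omega)).2
      have h2 := ((hfacts (c+1+d)).2.2 (by omega)).2
      rw [h] at h1
      rw [h1] at h2
      simp only [Nat.add_sub_cancel] at h2
      rw [show c + 1 + d - 1 = c + d by omega] at h2
      exact ihc d h2
  have hd : w = (replL q p)^[b - a] w := hpeel a (b - a) (by rw [show a + (b-a) = b by omega]; exact heq)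
  have hp : p <:+: (replL q p)^[b - a] w := ((hfacts (b - a)).2.2 (by omega)).1
  rw [← hd] at hp
  exact hw hp

include hne hlen hpb in
theorem master {w : List α} (hw : ¬ p <:+: w) :
    ¬ q <:+: phiL q p w ∧ (phiL q p w).length = w.length ∧
      (q <:+: w → p <:+: phiL q p w ∧ phiR p q (phiL q p w) = w) := by
  have hSne := terminates hne hlen hpb hw
  set k := sInf {i | ¬ q <:+: (replL q p)^[i] w} with hk
  have hknot : ¬ q <:+: (replL q p)^[k] w := Nat.sInf_mem hSne
  have hbefore : ∀ m < k, q <:+: (replL q p)^[m] w := by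
    intro m hm
    by_contra hmn
    exact Nat.notMem_of_lt_sInf hm hmn
  have hphiL : phiL q p w = (replL q p)^[k] w := rfl
  have hfacts := fun m (hm : m ≤ k) =>
    iter_facts hne hlen hpb hw m (fun m' hm' => hbefore m' (by omega))
  refine ⟨hphiL ▸ hknot, hphiL ▸ (hfacts k le_rfl).2.1, fun hqw => ?_⟩
  have hkpos : 0 < k := by
    by_contra h0
    push_neg at h0
    apply hknot
    rw [show k = 0 by omega]
    simpa using hqw
  refine ⟨hphiL ▸ ((hfacts k le_rfl).2.2 hkpos).1, ?_⟩
  have hRiter : ∀ j ≤ k, (replR p q)^[j] ((replL q p)^[k] w) = (replL q p)^[k - j] w := by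
    intro j
    induction j with
    | zero => simp
    | succ j ihj =>
      intro hj
      rw [Function.iterate_succ_apply', ihj (by omega)]
      have := ((hfacts (k - j) (by omega)).2.2 (by omega)).2
      rw [this, show k - j - 1 = k - (j+1) by omega]
  have hmemk : ¬ p <:+: (replR p q)^[k] ((replL q p)^[k] w) := by
    rw [hRiter k le_rfl]
    simpa using hw
  have hnotmem : ∀ j < k, p <:+: (replR p q)^[j] ((replL q p)^[k] w) := by
    intro j hj
    rw [hRiter j (by omega)]
    exact ((hfacts (k - j) (by omega)).2.2 (by omega)).1
  have hsinf : sInf {j | ¬ p <:+: (replR p q)^[j] ((replL q p)^[k] w)} = k := by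
    apply _root_.le_antisymm
    · exact Nat.sInf_le hmemk
    · by_contra hlt
      push_neg at hlt
      have hmem := Nat.sInf_mem (⟨k, hmemk⟩ :
        {j | ¬ p <:+: (replR p q)^[j] ((replL q p)^[k] w)}.Nonempty)
      exact hmem (hnotmem _ hlt)
  rw [hphiL, phiR, hsinf, hRiter k le_rfl]
  simp

end Master

section Reverse

theorem occAt_reverse {u x : List α} {i : ℕ} (h : OccAt u x i) :
    OccAt u.reverse x.reverse (x.length - u.length - i) := by
  obtain ⟨s, t, rfl, rfl⟩ := occAt_iff_exists.mp h
  apply occAt_iff_exists.mpr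
  refine ⟨t.reverse, s.reverse, by simp, ?_⟩
  simp only [List.length_reverse, List.length_append]
  omega

theorem prefix_reverse_iff {x u : List α} : x <+: u.reverse ↔ x.reverse <:+ u := by
  conv_lhs => rw [← List.reverse_reverse x]
  exact List.reverse_prefix

theorem suffix_reverse_iff {x u : List α} : x <:+ u.reverse ↔ x.reverse <+: u := by
  conv_lhs => rw [← List.reverse_reverse x]
  exact List.reverse_suffix

theorem properBorder_reverse {x u : List α} :
    ProperBorder x u.reverse ↔ ProperBorder x.reverse u := by
  unfold ProperBorder Border
  rw [prefix_reverse_iff, suffix_reverse_iff]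
  constructor
  · rintro ⟨⟨h1, h2, h3⟩, h4⟩
    exact ⟨⟨fun h => h1 (by simpa using congrArg List.reverse h), h3, h2⟩,
      fun h => h4 (by rw [← List.reverse_reverse x, h])⟩
  · rintro ⟨⟨h1, h2, h3⟩, h4⟩
    exact ⟨⟨fun h => h1 (by rw [h]; rfl), h3, h2⟩,
      fun h => h4 (by rw [h, List.reverse_reverse])⟩

theorem infix_reverse_iff {x u : List α} : x <:+: u.reverse ↔ x.reverse <:+: u := by
  conv_lhs => rw [← List.reverse_reverse x]
  exact List.reverse_infix

variable [DecidableEq α]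

theorem replR_reverse (p q y : List α) (hp0 : p ≠ []) :
    replR p q y = (replL p.reverse q.reverse y.reverse).reverse := by
  by_cases h : p <:+: y
  · obtain ⟨i, hi, hmax⟩ := exists_maxOcc h
    have hiy := hi.1
    have hrev : OccAt p.reverse y.reverse (y.length - p.length - i) := occAt_reverse hi
    have hminrev : ∀ j < y.length - p.length - i, ¬ OccAt p.reverse y.reverse j := by
      intro j hj hocc
      have h2 := occAt_reverse hocc
      simp only [List.reverse_reverse, List.length_reverse] at h2
      have hjy := hocc.1
      simp only [List.length_reverse] at hjy
      exact hmax _ (by omega) h2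
    rw [replR_eq_splice hp0 hi hmax,
      replL_eq_splice (fun hh => hp0 (by simpa using congrArg List.reverse hh)) hrev hminrev]
    rw [splice, splice]
    simp only [List.reverse_append, List.reverse_reverse, List.length_reverse]
    rw [List.reverse_drop, List.reverse_take, List.reverse_reverse, List.length_reverse]
    rw [show y.length - (y.length - p.length - i + p.length) = i by omega]
    rw [show y.length - (y.length - p.length - i) = i + p.length by omega]
    rw [List.append_assoc]
  · rw [replR_eq_of_not h, replL_eq_of_not (fun hc => h (List.reverse_infix.mp hc)),
      List.reverse_reverse]

theorem replR_reverse_iter (p q y : List α) (hp0 : p ≠ []) (m : ℕ) :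
    (replR p q)^[m] y = ((replL p.reverse q.reverse)^[m] y.reverse).reverse := by
  induction m with
  | zero => simp
  | succ m ih =>
    rw [Function.iterate_succ_apply', Function.iterate_succ_apply', ih,
      replR_reverse p q _ hp0, List.reverse_reverse]

theorem phiR_reverse (p q y : List α) (hp0 : p ≠ []) :
    phiR p q y = (phiL p.reverse q.reverse y.reverse).reverse := by
  rw [phiR, phiL]
  have hset : {j | ¬ p <:+: (replR p q)^[j] y} =
      {i | ¬ p.reverse <:+: (replL p.reverse q.reverse)^[i] y.reverse} := by
    ext j
    simp only [Set.mem_setOf_eq, replR_reverse_iter p q y hp0 j]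
    rw [infix_reverse_iff]
  rw [hset, replR_reverse_iter p q y hp0]

end Reverse

end Stmt12Aux

open Stmt12Aux in
/-- If `w` avoids both `p` and `q` then `phiL q p w = w`; consequently `phiL q p`
restricts to a bijection from the length-`n` words avoiding `p` and containing `q` to
the length-`n` words avoiding `q` and containing `p`. -/
theorem stmt_12 {α : Type*} [Fintype α] [DecidableEq α] {p q : List α}
    (hne : p ≠ q) (hlen : p.length = q.length)
    (hpb : {x | ProperBorder x p} = {x | ProperBorder x q}) (n : ℕ) :
    (∀ w : List α, ¬ p <:+: w → ¬ q <:+: w → phiL q p w = w) ∧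
    Set.BijOn (phiL q p) {w : List α | w.length = n ∧ ¬ p <:+: w ∧ q <:+: w}
      {w : List α | w.length = n ∧ ¬ q <:+: w ∧ p <:+: w} := by
  have hn : 0 < p.length := plen_pos hne hlen
  have hp0 : p ≠ [] := fun h => by rw [h, List.length_nil] at hn; omega
  have hq0 : q ≠ [] := fun h => by rw [h, List.length_nil] at hlen; omega
  have hne' : q.reverse ≠ p.reverse := fun h => hne (List.reverse_injective h).symm
  have hlen' : q.reverse.length = p.reverse.length := by
    simp only [List.length_reverse]; omega
  have hpb' : {x | ProperBorder x q.reverse} = {x | ProperBorder x p.reverse} := by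
    ext x
    simp only [Set.mem_setOf_eq, properBorder_reverse]
    exact (Set.ext_iff.mp hpb.symm x.reverse)
  -- facts about phiR from the mirrored master lemma
  have hmirror : ∀ y : List α, ¬ q <:+: y → p <:+: y →
      ¬ p <:+: phiR p q y ∧ (phiR p q y).length = y.length ∧ q <:+: phiR p q y ∧
        phiL q p (phiR p q y) = y := by
    intro y hqy hpy
    have hm := master hne' hlen' hpb' (w := y.reverse)
      (fun hc => hqy (List.reverse_infix.mp hc))
    obtain ⟨h1, h2, h3⟩ := hm
    have h4 := h3 (by rw [← List.reverse_infix]; simpa using hpy)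
    have hkey : phiL p.reverse q.reverse y.reverse = (phiR p q y).reverse := by
      rw [phiR_reverse p q y hp0, List.reverse_reverse]
    rw [hkey] at h1 h2 h4
    refine ⟨fun hc => h1 (by rw [← List.reverse_infix] at hc; exact hc), ?_, ?_, ?_⟩
    · simpa using h2
    · rw [← List.reverse_infix]
      exact h4.1
    · have h5 := h4.2
      rw [phiR_reverse q.reverse p.reverse _ (fun hh => hq0 (by
        simpa using congrArg List.reverse hh))] at h5
      simp only [List.reverse_reverse] at h5
      exact List.reverse_injective h5
  refine ⟨fun w _ hq => phiL_eq_self hq, ?_, ?_, ?_⟩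
  · -- MapsTo
    rintro w ⟨hlw, hpw, hqw⟩
    obtain ⟨h1, h2, h3⟩ := master hne hlen hpb hpw
    exact ⟨by rw [h2, hlw], h1, (h3 hqw).1⟩
  · -- InjOn
    rintro w ⟨-, hpw, hqw⟩ w' ⟨-, hpw', hqw'⟩ heq
    have e1 := ((master hne hlen hpb hpw).2.2 hqw).2
    have e2 := ((master hne hlen hpb hpw').2.2 hqw').2
    rw [← e1, ← e2, heq]
  · -- SurjOn
    rintro y ⟨hly, hqy, hpy⟩
    obtain ⟨h1, h2, h3, h4⟩ := hmirror y hqy hpy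
    exact ⟨phiR p q y, ⟨by rw [h2, hly], h1, h3⟩, h4⟩
end
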